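/- Let Γ be a nonempty finite set and N a quadratic normalisation on Γ satisfying Conditions (unit) and (home). Then the Mealy automaton M_{Γ,N} generates a monoid isomorphic to S¹; precisely, for all words u, v ∈ Γ*, the production functions σ_u and σ_v are equal as functions Γ* → Γ* if and only if (u, v) lies in the monoid congruence on Γ* generated by all pairs (w, N(w)) for w ∈ Γ⁺ together with the pair ([𝟙], ε). -/
import Mathlib


namespace Stmt4

variable {α : Type}

/-- Apply the two-letter normalisation `nf` at (1-indexed) position `i` of a word. -/
def applyAtL (nf : α → α → List α) : ℕ → List α → List α
  | 1, x :: y :: s => nf x y ++ s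
  | n + 2, x :: s => x :: applyAtL nf (n + 1) s
  | _, w => w

/-- Apply the two-letter normalisation along a finite sequence of positions
(the first position in the list is applied first). -/
def seqApplyL (nf : α → α → List α) (l : List ℕ) (w : List α) : List α :=
  l.foldl (fun w i => applyAtL nf i w) w

/-- Production function of the Mealy automaton `M_{Γ,N}` with state `x`. -/
def prodFn (tau sig : α → α → α) : α → List α → List α
  | _, [] => []
  | x, i :: s => sig x i :: prodFn tau sig (tau i x) s

/-- Production function of a word `u = x₁⋯xₙ`: `σ_u = σ_{xₙ} ∘ ⋯ ∘ σ_{x₁}`. -/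
def prodWord (tau sig : α → α → α) : List α → List α → List α
  | [], s => s
  | x :: u, s => prodWord tau sig u (prodFn tau sig x s)

/-- The defining relations of the monoid `S¹`: all pairs `(w, N w)` for nonempty `w`,
together with the pair `([𝟙], ε)`. -/
def presRel (N : List α → List α) (e : α) : FreeMonoid α → FreeMonoid α → Prop :=
  fun x y =>
    (FreeMonoid.toList x ≠ [] ∧ FreeMonoid.toList y = N (FreeMonoid.toList x)) ∨
      (FreeMonoid.toList x = [e] ∧ FreeMonoid.toList y = [])

/-! ### Auxiliary definitions and lemmas -/

section Aux

variable {Γ : Type} (tau sig : Γ → Γ → Γ)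

/-- Final state of the automaton after reading `s` starting from state `x`. -/
def fstate (s : List Γ) (x : Γ) : Γ := s.foldl (fun st i => tau i st) x

/-- The sequence of final states produced while the letters of a word `u` of states
successively process `s`. -/
def stWord : List Γ → List Γ → List Γ
  | _, [] => []
  | s, x :: u => fstate tau s x :: stWord (prodFn tau sig x s) u

lemma fstate_append (s t : List Γ) (x : Γ) :
    fstate tau (s ++ t) x = fstate tau t (fstate tau s x) := by
  simp [fstate, List.foldl_append]

lemma prodFn_append (x : Γ) (s t : List Γ) :
    prodFn tau sig x (s ++ t) = prodFn tau sig x s ++ prodFn tau sig (fstate tau s x) t := by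
  induction s generalizing x with
  | nil => rfl
  | cons i s ih => simp [prodFn, ih]; rfl

lemma prodWord_append (u v s : List Γ) :
    prodWord tau sig (u ++ v) s = prodWord tau sig v (prodWord tau sig u s) := by
  induction u generalizing s with
  | nil => rfl
  | cons x u ih => simp [prodWord, ih]

end Aux

section Aux2

variable {Γ : Type} (N : List Γ → List Γ) (tau sig : Γ → Γ → Γ)

lemma applyAt1 (hNbar : ∀ x y : Γ, N [x, y] = [tau x y, sig y x]) (x y : Γ) (s : List Γ) :
    applyAtL (fun a b => N [a, b]) 1 (x :: y :: s) = tau x y :: sig y x :: s := by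
  show N [x, y] ++ s = _
  rw [hNbar]; rfl

lemma applyAt2 (hNbar : ∀ x y : Γ, N [x, y] = [tau x y, sig y x]) (x y z : Γ) (s : List Γ) :
    applyAtL (fun a b => N [a, b]) 2 (x :: y :: z :: s) = x :: tau y z :: sig z y :: s := by
  show x :: applyAtL (fun a b => N [a, b]) 1 (y :: z :: s) = _
  rw [applyAt1 N tau sig hNbar]

lemma key3
    (hNbar : ∀ x y : Γ, N [x, y] = [tau x y, sig y x])
    (hhome : ∀ x y z : Γ,
      N [x, y, z] = seqApplyL (fun a b => N [a, b]) [1, 2, 1] [x, y, z] ∧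
      N [x, y, z] = seqApplyL (fun a b => N [a, b]) [2, 1, 2, 1] [x, y, z])
    (i a b : Γ) :
    N [i, a, b] = N [tau i a, tau (sig a i) b] ++ [sig b (sig a i)] := by
  have h := (hhome i a b).1
  simp only [seqApplyL, List.foldl, applyAt1 N tau sig hNbar, applyAt2 N tau sig hNbar] at h
  rw [h, hNbar]
  rfl

lemma hNN (habs : ∀ u w v : List Γ, w ≠ [] → N (u ++ N w ++ v) = N (u ++ w ++ v))
    (w : List Γ) (hw : w ≠ []) : N (N w) = N w := by
  simpa using habs [] w [] hw

lemma resid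
    (hlen : ∀ w : List Γ, (N w).length = w.length)
    (habs : ∀ u w v : List Γ, w ≠ [] → N (u ++ N w ++ v) = N (u ++ w ++ v))
    (hNbar : ∀ x y : Γ, N [x, y] = [tau x y, sig y x])
    (hhome : ∀ x y z : Γ,
      N [x, y, z] = seqApplyL (fun a b => N [a, b]) [1, 2, 1] [x, y, z] ∧
      N [x, y, z] = seqApplyL (fun a b => N [a, b]) [2, 1, 2, 1] [x, y, z])
    (i a b a' b' : Γ) (h : N [a, b] = N [a', b']) :
    sig b (sig a i) = sig b' (sig a' i) ∧
      N [tau i a, tau (sig a i) b] = N [tau i a', tau (sig a' i) b'] := by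
  have h1 : N (i :: N [a, b]) = N [i, a, b] := by simpa using habs [i] [a, b] [] (by simp)
  have h2 : N (i :: N [a', b']) = N [i, a', b'] := by simpa using habs [i] [a', b'] [] (by simp)
  have h3 : N [i, a, b] = N [i, a', b'] := by rw [← h1, ← h2, h]
  rw [key3 N tau sig hNbar hhome, key3 N tau sig hNbar hhome] at h3
  have hl : (N [tau i a, tau (sig a i) b]).length = (N [tau i a', tau (sig a' i) b']).length := by
    rw [hlen, hlen]; rfl
  obtain ⟨hA, hC⟩ := List.append_inj h3 hl
  exact ⟨by simpa using hC, hA⟩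

lemma pairFn
    (hlen : ∀ w : List Γ, (N w).length = w.length)
    (habs : ∀ u w v : List Γ, w ≠ [] → N (u ++ N w ++ v) = N (u ++ w ++ v))
    (hNbar : ∀ x y : Γ, N [x, y] = [tau x y, sig y x])
    (hhome : ∀ x y z : Γ,
      N [x, y, z] = seqApplyL (fun a b => N [a, b]) [1, 2, 1] [x, y, z] ∧
      N [x, y, z] = seqApplyL (fun a b => N [a, b]) [2, 1, 2, 1] [x, y, z]) :
    ∀ (s : List Γ) (a b a' b' : Γ), N [a, b] = N [a', b'] →
      prodFn tau sig b (prodFn tau sig a s) = prodFn tau sig b' (prodFn tau sig a' s) := by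
  intro s
  induction s with
  | nil => intros; rfl
  | cons i s ih =>
    intro a b a' b' h
    obtain ⟨h1, h2⟩ := resid N tau sig hlen habs hNbar hhome i a b a' b' h
    simp only [prodFn, h1]
    congr 1
    exact ih _ _ _ _ h2

lemma prodWord_applyAt
    (hlen : ∀ w : List Γ, (N w).length = w.length)
    (habs : ∀ u w v : List Γ, w ≠ [] → N (u ++ N w ++ v) = N (u ++ w ++ v))
    (hNbar : ∀ x y : Γ, N [x, y] = [tau x y, sig y x])
    (hhome : ∀ x y z : Γ,
      N [x, y, z] = seqApplyL (fun a b => N [a, b]) [1, 2, 1] [x, y, z] ∧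
      N [x, y, z] = seqApplyL (fun a b => N [a, b]) [2, 1, 2, 1] [x, y, z]) :
    ∀ (i : ℕ) (w s : List Γ),
      prodWord tau sig (applyAtL (fun x y => N [x, y]) i w) s = prodWord tau sig w s := by
  intro i
  induction i with
  | zero => intro w s; rfl
  | succ m ih =>
    intro w s
    cases m with
    | zero =>
      cases w with
      | nil => rfl
      | cons x w' =>
        cases w' with
        | nil => rfl
        | cons y t =>
          rw [applyAt1 N tau sig hNbar]
          show prodWord tau sig t (prodFn tau sig (sig y x) (prodFn tau sig (tau x y) s))
            = prodWord tau sig t (prodFn tau sig y (prodFn tau sig x s))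
          congr 1
          apply pairFn N tau sig hlen habs hNbar hhome
          rw [← hNbar x y]
          exact hNN N habs [x, y] (by simp)
    | succ k =>
      cases w with
      | nil => rfl
      | cons x t =>
        show prodWord tau sig (applyAtL (fun x y => N [x, y]) (k + 1) t)
            (prodFn tau sig x s) = prodWord tau sig t (prodFn tau sig x s)
        exact ih t _

lemma prodWord_seq
    (hlen : ∀ w : List Γ, (N w).length = w.length)
    (habs : ∀ u w v : List Γ, w ≠ [] → N (u ++ N w ++ v) = N (u ++ w ++ v))
    (hNbar : ∀ x y : Γ, N [x, y] = [tau x y, sig y x])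
    (hhome : ∀ x y z : Γ,
      N [x, y, z] = seqApplyL (fun a b => N [a, b]) [1, 2, 1] [x, y, z] ∧
      N [x, y, z] = seqApplyL (fun a b => N [a, b]) [2, 1, 2, 1] [x, y, z]) :
    ∀ (l : List ℕ) (w s : List Γ),
      prodWord tau sig (seqApplyL (fun x y => N [x, y]) l w) s = prodWord tau sig w s := by
  intro l
  induction l with
  | nil => intro w s; rfl
  | cons i l ih =>
    intro w s
    show prodWord tau sig (seqApplyL (fun x y => N [x, y]) l
      (applyAtL (fun x y => N [x, y]) i w)) s = _
    rw [ih, prodWord_applyAt N tau sig hlen habs hNbar hhome]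

end Aux2

section Aux3

variable {Γ : Type} (N : List Γ → List Γ) (tau sig : Γ → Γ → Γ) (e : Γ)

lemma efacts
    (hone : ∀ x : Γ, N [x] = [x])
    (hNbar : ∀ x y : Γ, N [x, y] = [tau x y, sig y x])
    (hunit : ∀ w : List Γ, w ≠ [] → N (e :: w) = e :: N w ∧ N (w ++ [e]) = e :: N w) :
    ∀ x : Γ, tau e x = e ∧ sig x e = x ∧ tau x e = e ∧ sig e x = x := by
  intro x
  have h1 := (hunit [x] (by simp)).1
  have h2 := (hunit [x] (by simp)).2
  rw [hone] at h1 h2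
  rw [show (e :: [x]) = [e, x] from rfl, hNbar] at h1
  rw [show ([x] ++ [e]) = [x, e] from rfl, hNbar] at h2
  simp only [List.cons.injEq] at h1 h2
  exact ⟨h1.1, h1.2.1, h2.1, h2.2.1⟩

lemma prodFn_e (htaue' : ∀ x : Γ, tau x e = e) (hsige' : ∀ x : Γ, sig e x = x) :
    ∀ s : List Γ, prodFn tau sig e s = s := by
  intro s
  induction s with
  | nil => rfl
  | cons i s ih => simp [prodFn, hsige', htaue', ih]

lemma prodFn_econs (htaue : ∀ x : Γ, tau e x = e) (hsige : ∀ x : Γ, sig x e = x)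
    (htaue' : ∀ x : Γ, tau x e = e) (hsige' : ∀ x : Γ, sig e x = x) (x : Γ) (t : List Γ) :
    prodFn tau sig x (e :: t) = x :: t := by
  simp [prodFn, htaue, hsige, prodFn_e tau sig e htaue' hsige']

lemma fstate_e (htaue' : ∀ x : Γ, tau x e = e) : ∀ s : List Γ, fstate tau s e = e := by
  intro s
  induction s with
  | nil => rfl
  | cons i s ih => show fstate tau s (tau i e) = e; rw [htaue']; exact ih

lemma fstate_mem_e (htaue : ∀ x : Γ, tau e x = e) (htaue' : ∀ x : Γ, tau x e = e)
    (w t : List Γ) (x : Γ) :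
    fstate tau (w ++ e :: t) x = e := by
  rw [fstate_append]
  show fstate tau t (tau e _) = e
  rw [htaue]
  exact fstate_e tau e htaue' t

lemma stWord_rep (htaue : ∀ x : Γ, tau e x = e) (hsige : ∀ x : Γ, sig x e = x)
    (htaue' : ∀ x : Γ, tau x e = e) (hsige' : ∀ x : Γ, sig e x = x) :
    ∀ (u : List Γ) (m : ℕ), u.length ≤ m → ∀ w : List Γ,
      stWord tau sig (w ++ List.replicate m e) u = List.replicate u.length e := by
  intro u
  induction u with
  | nil => intros; rfl
  | cons x u ih =>
    intro m hm w
    cases m with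
    | zero => simp at hm
    | succ m' =>
      rw [show List.replicate (m' + 1) e = e :: List.replicate m' e from rfl]
      show fstate tau (w ++ e :: List.replicate m' e) x ::
          stWord tau sig (prodFn tau sig x (w ++ e :: List.replicate m' e)) u
        = List.replicate (x :: u).length e
      rw [fstate_mem_e tau e htaue htaue']
      have hp : prodFn tau sig x (w ++ e :: List.replicate m' e)
          = (prodFn tau sig x w ++ [fstate tau w x]) ++ List.replicate m' e := by
        rw [prodFn_append, prodFn_econs tau sig e htaue hsige htaue' hsige']
        simp
      rw [hp, ih m' (by simpa using hm)]
      rfl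

end Aux3

section Aux4

variable {Γ : Type} (N : List Γ → List Γ) (tau sig : Γ → Γ → Γ) (e : Γ)

lemma star1 (hNbar : ∀ x y : Γ, N [x, y] = [tau x y, sig y x]) :
    ∀ (s : List Γ) (x : Γ),
      conGen (presRel N e) (FreeMonoid.ofList (s.reverse ++ [x]))
        (FreeMonoid.ofList (fstate tau s x :: (prodFn tau sig x s).reverse)) := by
  intro s
  induction s with
  | nil => intro x; exact (conGen _).refl (FreeMonoid.ofList [x])
  | cons i s ih =>
    intro x
    have base : conGen (presRel N e) (FreeMonoid.ofList [i, x])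
        (FreeMonoid.ofList [tau i x, sig x i]) := by
      apply ConGen.Rel.of
      left
      refine ⟨by simp, ?_⟩
      simp [hNbar]
    have e1 : FreeMonoid.ofList ((i :: s).reverse ++ [x])
        = FreeMonoid.ofList s.reverse * FreeMonoid.ofList [i, x] := by
      rw [← FreeMonoid.ofList_append]
      congr 1
      simp
    have e2 : FreeMonoid.ofList (fstate tau (i :: s) x :: (prodFn tau sig x (i :: s)).reverse)
        = FreeMonoid.ofList (fstate tau s (tau i x) :: (prodFn tau sig (tau i x) s).reverse)
            * FreeMonoid.ofList [sig x i] := by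
      rw [← FreeMonoid.ofList_append]
      congr 1
      show fstate tau s (tau i x) :: (sig x i :: prodFn tau sig (tau i x) s).reverse = _
      simp
    rw [e1, e2]
    refine (conGen _).trans ((conGen _).mul ((conGen _).refl _) base) ?_
    have e3 : FreeMonoid.ofList s.reverse * FreeMonoid.ofList [tau i x, sig x i]
        = FreeMonoid.ofList (s.reverse ++ [tau i x]) * FreeMonoid.ofList [sig x i] := by
      rw [← FreeMonoid.ofList_append, ← FreeMonoid.ofList_append]
      congr 1
      simp
    rw [e3]
    exact (conGen _).mul (ih (tau i x)) ((conGen _).refl _)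

lemma star2 (hNbar : ∀ x y : Γ, N [x, y] = [tau x y, sig y x]) :
    ∀ (u s : List Γ),
      conGen (presRel N e) (FreeMonoid.ofList (s.reverse ++ u))
        (FreeMonoid.ofList (stWord tau sig s u ++ (prodWord tau sig u s).reverse)) := by
  intro u
  induction u with
  | nil =>
    intro s
    simp only [List.append_nil]
    exact (conGen (presRel N e)).refl (FreeMonoid.ofList s.reverse)
  | cons x u ih =>
    intro s
    have e1 : FreeMonoid.ofList (s.reverse ++ (x :: u))
        = FreeMonoid.ofList (s.reverse ++ [x]) * FreeMonoid.ofList u := by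
      rw [← FreeMonoid.ofList_append]
      congr 1
      simp
    rw [e1]
    refine (conGen _).trans
      ((conGen _).mul (star1 N tau sig e hNbar s x) ((conGen _).refl _)) ?_
    have e2 : FreeMonoid.ofList (fstate tau s x :: (prodFn tau sig x s).reverse)
          * FreeMonoid.ofList u
        = FreeMonoid.ofList [fstate tau s x]
          * FreeMonoid.ofList ((prodFn tau sig x s).reverse ++ u) := by
      rw [← FreeMonoid.ofList_append, ← FreeMonoid.ofList_append]
      rfl
    rw [e2]
    refine (conGen _).trans
      ((conGen _).mul ((conGen _).refl _) (ih (prodFn tau sig x s))) ?_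
    have e3 : FreeMonoid.ofList [fstate tau s x]
          * FreeMonoid.ofList (stWord tau sig (prodFn tau sig x s) u
              ++ (prodWord tau sig u (prodFn tau sig x s)).reverse)
        = FreeMonoid.ofList (stWord tau sig s (x :: u)
            ++ (prodWord tau sig (x :: u) s).reverse) := by
      rw [← FreeMonoid.ofList_append]
      rfl
    rw [e3]
    exact (conGen _).refl _

lemma rep_one : ∀ k : ℕ,
    conGen (presRel N e) (FreeMonoid.ofList (List.replicate k e)) 1 := by
  intro k
  induction k with
  | zero => exact (conGen _).refl _
  | succ k ih =>
    have base : conGen (presRel N e) (FreeMonoid.ofList [e]) 1 := by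
      apply ConGen.Rel.of
      right
      exact ⟨by simp, by simp⟩
    have e1 : FreeMonoid.ofList (List.replicate (k + 1) e)
        = FreeMonoid.ofList [e] * FreeMonoid.ofList (List.replicate k e) := by
      rw [← FreeMonoid.ofList_append]
      rfl
    rw [e1]
    have := (conGen (presRel N e)).mul base ih
    simpa using this

end Aux4

/-- Theorem `thm-main`: for a quadratic normalisation `(Γ,N)`
satisfying Conditions (unit) and (home), the Mealy automaton `M_{Γ,N}` generates a
monoid isomorphic to `S¹`: two words induce the same production function if and only if
they are congruent modulo the defining relations of `S¹`. -/
theorem mealy_monoid_iso_S1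
    {Γ : Type} [Fintype Γ] [Nonempty Γ]
    (N : List Γ → List Γ) (tau sig : Γ → Γ → Γ) (e : Γ)
    (hlen : ∀ w : List Γ, (N w).length = w.length)
    (hone : ∀ x : Γ, N [x] = [x])
    (habs : ∀ u w v : List Γ, w ≠ [] → N (u ++ N w ++ v) = N (u ++ w ++ v))
    (hquad₁ : ∀ w : List Γ, w ≠ [] →
      (N w = w ↔ ∀ p s : List Γ, ∀ x y : Γ, w = p ++ [x, y] ++ s → N [x, y] = [x, y]))
    (hquad₂ : ∀ w : List Γ, w ≠ [] →
      ∃ l : List ℕ, N w = seqApplyL (fun x y => N [x, y]) l w)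
    (hNbar : ∀ x y : Γ, N [x, y] = [tau x y, sig y x])
    (hunit : ∀ w : List Γ, w ≠ [] →
      N (e :: w) = e :: N w ∧ N (w ++ [e]) = e :: N w)
    (hhome : ∀ x y z : Γ,
      N [x, y, z] = seqApplyL (fun a b => N [a, b]) [1, 2, 1] [x, y, z] ∧
      N [x, y, z] = seqApplyL (fun a b => N [a, b]) [2, 1, 2, 1] [x, y, z]) :
    ∀ u v : List Γ, prodWord tau sig u = prodWord tau sig v ↔
      conGen (presRel N e) (FreeMonoid.ofList u) (FreeMonoid.ofList v) := by
  have hef := efacts N tau sig e hone hNbar hunit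
  have htaue : ∀ x : Γ, tau e x = e := fun x => (hef x).1
  have hsige : ∀ x : Γ, sig x e = x := fun x => (hef x).2.1
  have htaue' : ∀ x : Γ, tau x e = e := fun x => (hef x).2.2.1
  have hsige' : ∀ x : Γ, sig e x = x := fun x => (hef x).2.2.2
  have sigmaN : ∀ w : List Γ, w ≠ [] → ∀ s : List Γ,
      prodWord tau sig (N w) s = prodWord tau sig w s := by
    intro w hw s
    obtain ⟨l, hl⟩ := hquad₂ w hw
    rw [hl]
    exact prodWord_seq N tau sig hlen habs hNbar hhome l w s
  have helper : ∀ (w : List Γ) (m : ℕ), w.length ≤ m →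
      conGen (presRel N e) (FreeMonoid.ofList w)
        (FreeMonoid.ofList (prodWord tau sig w (List.replicate m e)).reverse) := by
    intro w m hm
    have h := star2 N tau sig e hNbar w (List.replicate m e)
    rw [List.reverse_replicate] at h
    have hst : stWord tau sig (List.replicate m e) w = List.replicate w.length e := by
      have := stWord_rep tau sig e htaue hsige htaue' hsige' w m hm []
      simpa using this
    rw [hst] at h
    have h1 : conGen (presRel N e) (FreeMonoid.ofList w)
        (FreeMonoid.ofList (List.replicate m e ++ w)) := by
      have h0 := (conGen (presRel N e)).mul (rep_one N e m)
        ((conGen (presRel N e)).refl (FreeMonoid.ofList w))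
      have h2 := (conGen (presRel N e)).symm h0
      rw [one_mul, ← FreeMonoid.ofList_append] at h2
      exact h2
    have h3 : conGen (presRel N e)
        (FreeMonoid.ofList (List.replicate w.length e
          ++ (prodWord tau sig w (List.replicate m e)).reverse))
        (FreeMonoid.ofList (prodWord tau sig w (List.replicate m e)).reverse) := by
      have h0 := (conGen (presRel N e)).mul (rep_one N e w.length)
        ((conGen (presRel N e)).refl
          (FreeMonoid.ofList (prodWord tau sig w (List.replicate m e)).reverse))
      rw [one_mul, ← FreeMonoid.ofList_append] at h0
      exact h0
    exact (conGen _).trans h1 ((conGen _).trans h h3)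
  intro u v
  constructor
  · intro h
    have hu := helper u (max u.length v.length) (le_max_left _ _)
    have hv := helper v (max u.length v.length) (le_max_right _ _)
    rw [h] at hu
    exact (conGen _).trans hu ((conGen _).symm hv)
  · intro h
    have h' : ConGen.Rel (presRel N e) (FreeMonoid.ofList u) (FreeMonoid.ofList v) := h
    have main : ∀ a b : FreeMonoid Γ, ConGen.Rel (presRel N e) a b →
        ∀ s : List Γ, prodWord tau sig (FreeMonoid.toList a) s
          = prodWord tau sig (FreeMonoid.toList b) s := by
      intro a b hab
      induction hab with
      | of x y hxy =>
        intro s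
        rcases hxy with ⟨hne, hy⟩ | ⟨hx, hy⟩
        · rw [hy]
          exact (sigmaN _ hne s).symm
        · rw [hx, hy]
          show prodWord tau sig [] (prodFn tau sig e s) = s
          exact prodFn_e tau sig e htaue' hsige' s
      | refl x => intro s; rfl
      | symm _ ih => intro s; exact (ih s).symm
      | trans _ _ ih1 ih2 => intro s; exact (ih1 s).trans (ih2 s)
      | mul h1 h2 ih1 ih2 =>
        intro s
        rw [FreeMonoid.toList_mul, FreeMonoid.toList_mul, prodWord_append, prodWord_append,
          ih1 s, ih2]
    funext s
    have := main _ _ h' s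
    simpa using this

end Stmt4
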